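/- Let p be a prime and n ≥ 1. For any integers a, b with p^{n−1} ≤ a, b < p^n, the number of common descendants |Desc(a) ∩ Desc(b)| is either 0 or a power of 2; more precisely it equals 0 or 2^m for some 0 ≤ m ≤ n − 1. -/

import Mathlib

/-- For `p^m ≤ a < p^(m+1)` with base-`p` expansion `a = Σ_{i=0}^m a_i p^i` (so `a_m ≠ 0`),
the set of descendants of `a` is
`Desc(a) = { a_m p^m + Σ_{i=0}^{m-1} ε_i a_i p^i : ε_i ∈ {1, -1} } ⊆ ℤ`. -/
def Desc (p m a : ℕ) : Set ℤ :=
  {d | ∃ ε : ℕ → ℤ, (∀ i, ε i = 1 ∨ ε i = -1) ∧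
    d = ((a / p ^ m : ℕ) : ℤ) * (p : ℤ) ^ m +
      ∑ i ∈ Finset.range m, ε i * (((a / p ^ i % p : ℕ) : ℤ) * (p : ℤ) ^ i)}

/-- `X_{ab}` is the number of common descendants of `a` and `b`. -/
noncomputable def Xcard (p m a b : ℕ) : ℕ := (Desc p m a ∩ Desc p m b).ncard

/-- `Y_{ab}` is the number of descendants `d` of `a` such that `d - 1` is a descendant of `b`. -/
noncomputable def Ycard (p m a b : ℕ) : ℕ := {d ∈ Desc p m a | d - 1 ∈ Desc p m b}.ncard

/-!
Every descendant of `a` has the parity of `a`. Instead of common descendants, count the *close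
pairs* `(d, d') ∈ Desc a × Desc b` with `|d - d'| ≤ 1`: when `a ≡ b (mod 2)` these are exactly the
diagonal pairs `(d, d)` of common descendants, and otherwise there are no common descendants.

Writing `d = x + p e`, `d' = y + p f` with `x = ±a₀`, `y = ±b₀` the lowest digits, a close pair
of `a, b` is a close pair `(e, f)` of `a / p, b / p` together with signs such that
`|x - y + p (e - f)| ≤ 1`. By parity, `e - f` is `0` for all close pairs `(e, f)` or `±1` for all
of them; the number of fitting signs is symmetric in `e - f` and at most `2`, so each digit
multiplies the number of close pairs by `0`, `1` or `2`.
-/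

def plusMinus (r : ℤ) : Finset ℤ := {r, -r}

lemma mem_plusMinus {r x : ℤ} : x ∈ plusMinus r ↔ x = r ∨ x = -r := by
  simp [plusMinus]

lemma neg_mem_plusMinus {r x : ℤ} (hx : x ∈ plusMinus r) : -x ∈ plusMinus r := by
  rcases mem_plusMinus.1 hx with rfl | rfl <;> simp [mem_plusMinus]

lemma abs_lt_of_mem_plusMinus {p r : ℕ} (hr : r < p) {x : ℤ} (hx : x ∈ plusMinus r) :
    |x| < p := by
  rcases mem_plusMinus.1 hx with rfl | rfl <;> simpa using hr

def descFinset (p : ℕ) : ℕ → ℕ → Finset ℤ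
  | 0, a => {(a : ℤ)}
  | m + 1, a =>
    (plusMinus (a % p : ℕ) ×ˢ descFinset p m (a / p)).image fun q => q.1 + p * q.2

lemma desc_sum_succ (p m a : ℕ) (ε : ℕ → ℤ) :
    ((a / p ^ (m + 1) : ℕ) : ℤ) * (p : ℤ) ^ (m + 1) +
        ∑ i ∈ Finset.range (m + 1), ε i * (((a / p ^ i % p : ℕ) : ℤ) * (p : ℤ) ^ i) =
      ε 0 * (a % p : ℕ) + p * (((a / p / p ^ m : ℕ) : ℤ) * (p : ℤ) ^ m +
        ∑ i ∈ Finset.range m, ε (i + 1) * (((a / p / p ^ i % p : ℕ) : ℤ) * (p : ℤ) ^ i)) := by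
  have hdiv (i : ℕ) : a / p ^ (i + 1) = a / p / p ^ i := by
    rw [Nat.div_div_eq_div_mul, pow_succ']
  simp only [Finset.sum_range_succ', hdiv]
  simp only [pow_succ, mul_add, Finset.mul_sum, pow_zero, Nat.div_one, mul_one]
  ring_nf

lemma desc_zero (p a : ℕ) : Desc p 0 a = {(a : ℤ)} := by
  ext d
  simp only [Desc, pow_zero, Nat.div_one, mul_one, Finset.range_zero, Finset.sum_empty,
    add_zero, Set.mem_ofPred_eq, Set.mem_singleton_iff]
  exact ⟨fun ⟨_, _, hd⟩ => hd, fun hd => ⟨fun _ => 1, fun _ => Or.inl rfl, hd⟩⟩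

lemma desc_succ (p m a : ℕ) :
    Desc p (m + 1) a =
      {d | ∃ x ∈ plusMinus (a % p : ℕ), ∃ e ∈ Desc p m (a / p), d = x + p * e} := by
  ext d
  simp only [Desc, Set.mem_ofPred_eq, desc_sum_succ]
  constructor
  · rintro ⟨ε, hε, rfl⟩
    refine ⟨ε 0 * (a % p : ℕ), ?_, _, ⟨fun i => ε (i + 1), fun i => hε (i + 1), rfl⟩, rfl⟩
    rcases hε 0 with h | h <;> simp [h, mem_plusMinus]
  · rintro ⟨x, hx, _, ⟨ε, hε, rfl⟩, rfl⟩
    obtain ⟨s, hs, rfl⟩ : ∃ s : ℤ, (s = 1 ∨ s = -1) ∧ x = s * (a % p : ℕ) := by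
      rcases mem_plusMinus.1 hx with rfl | rfl
      exacts [⟨1, Or.inl rfl, by ring⟩, ⟨-1, Or.inr rfl, by ring⟩]
    refine ⟨fun i => if i = 0 then s else ε (i - 1), fun i => ?_, by simp⟩
    dsimp only
    split_ifs
    exacts [hs, hε _]

lemma coe_descFinset (p : ℕ) : ∀ m a, (descFinset p m a : Set ℤ) = Desc p m a
  | 0, a => by simp [descFinset, desc_zero]
  | m + 1, a => by
    ext d
    simp [descFinset, desc_succ, ← coe_descFinset p m (a / p), eq_comm, and_assoc]

lemma descFinset_modEq_two (p : ℕ) :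
    ∀ m a, ∀ d ∈ descFinset p m a, d ≡ a [ZMOD 2]
  | 0, a, d, hd => by simp_all [descFinset]
  | m + 1, a, d, hd => by
    simp only [descFinset, Finset.mem_image, Finset.mem_product] at hd
    obtain ⟨⟨x, e⟩, ⟨hx, he⟩, rfl⟩ := hd
    have hdigit : x ≡ (a % p : ℕ) [ZMOD 2] := by
      rcases mem_plusMinus.1 hx with rfl | rfl
      exacts [rfl, Int.modEq_iff_dvd.2 ⟨(a % p : ℕ), by ring⟩]
    have ha : (a : ℤ) = (a % p : ℕ) + p * (a / p : ℕ) := by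
      exact_mod_cast (Nat.mod_add_div a p).symm
    rw [ha]
    exact hdigit.add ((descFinset_modEq_two p m _ e he).mul_left _)

section
variable {p : ℕ}

lemma eq_and_eq_of_add_mul_eq {r : ℕ} (hr : r < p) {x x' e e' : ℤ} (hx : x ∈ plusMinus r)
    (hx' : x' ∈ plusMinus r) (he : e ≡ e' [ZMOD 2]) (h : x + p * e = x' + p * e') :
    x = x' ∧ e = e' := by
  obtain ⟨k, hk⟩ := (Int.modEq_iff_dvd.1 he.symm)
  have hbound : |(p : ℤ) * k| < p := by
    have := abs_lt_of_mem_plusMinus hr hx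
    have := abs_lt_of_mem_plusMinus hr hx'
    rw [abs_lt] at *
    constructor <;> nlinarith
  have hk0 : k = 0 :=
    (mul_eq_zero.1 (Int.eq_zero_of_abs_lt_dvd (dvd_mul_right _ _) hbound)).resolve_left
      (by omega)
  obtain rfl : e = e' := by omega
  exact ⟨by omega, rfl⟩

lemma abs_sub_le_one_of_abs_add_mul_le_one {r s : ℕ} (hr : r < p) (hs : s < p) {x y δ : ℤ}
    (hx : x ∈ plusMinus r) (hy : y ∈ plusMinus s) (h : |x - y + p * δ| ≤ 1) : |δ| ≤ 1 := by
  have hx := abs_lt_of_mem_plusMinus hr hx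
  have hy := abs_lt_of_mem_plusMinus hs hy
  rw [abs_le, abs_lt] at *
  constructor <;> nlinarith

/-- Sign choices `x = ±r`, `y = ±s` of two lowest digits that keep `x + p e` and `y + p f` within
distance one when `e - f = δ`. -/
def closeDigitCount (p r s : ℕ) (δ : ℤ) : ℕ :=
  ((plusMinus r ×ˢ plusMinus s).filter fun q => |q.1 - q.2 + p * δ| ≤ 1).card

lemma closeDigitCount_neg (r s : ℕ) (δ : ℤ) :
    closeDigitCount p r s (-δ) = closeDigitCount p r s δ := by
  unfold closeDigitCount
  refine Finset.card_nbij' (fun q => -q) (fun q => -q) ?_ ?_ (fun _ _ => neg_neg _)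
    (fun _ _ => neg_neg _) <;>
  · intro q hq
    simp only [Finset.coe_filter, Finset.mem_product, Set.mem_ofPred_eq, Prod.fst_neg,
      Prod.snd_neg] at hq ⊢
    refine ⟨⟨neg_mem_plusMinus hq.1.1, neg_mem_plusMinus hq.1.2⟩, ?_⟩
    rw [← abs_neg]
    convert hq.2 using 2
    ring

lemma closeDigitCount_le_two {r s : ℕ} (hr : r < p) (δ : ℤ) :
    closeDigitCount p r s δ ≤ 2 := by
  unfold closeDigitCount
  rcases eq_or_ne r 0 with rfl | hr0
  · calc _ ≤ (plusMinus (0 : ℕ) ×ˢ plusMinus s).card := Finset.card_filter_le _ _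
      _ ≤ 2 := by simp [plusMinus, Finset.card_le_two]
  · calc _ ≤ (plusMinus r).card := Finset.card_le_card_of_injOn Prod.fst ?_ ?_
      _ ≤ 2 := Finset.card_le_two
    · intro q hq
      simp only [Finset.coe_filter, Finset.mem_product, Set.mem_ofPred_eq] at hq
      exact hq.1.1
    -- both `y` and `-y ≠ y` fitting would force `|y| = 1` and `x = -p δ`, but `0 < |x| < p`.
    · rintro ⟨x, y⟩ hq ⟨x', y'⟩ hq' (rfl : x = x')
      simp only [Finset.coe_filter, Finset.mem_product, Set.mem_ofPred_eq] at hq hq'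
      obtain ⟨⟨hx, hy⟩, hclose⟩ := hq
      obtain ⟨⟨-, hy'⟩, hclose'⟩ := hq'
      have hxp := abs_lt_of_mem_plusMinus hr hx
      have hx0 : x ≠ 0 := by rcases mem_plusMinus.1 hx with rfl | rfl <;> simpa using hr0
      refine Prod.ext rfl ?_
      by_contra hne
      have hy'neg : y' = -y := by
        rcases mem_plusMinus.1 hy with rfl | rfl <;> rcases mem_plusMinus.1 hy' with rfl | rfl <;>
          simp_all
      rw [hy'neg, abs_le] at hclose'
      rw [abs_le] at hclose
      have hxδ : x = -(p * δ) := by omega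
      exact hx0 (Int.eq_zero_of_abs_lt_dvd ⟨-δ, by rw [hxδ, mul_neg]⟩ hxp)

def closePairs (p m a b : ℕ) : Finset (ℤ × ℤ) :=
  (descFinset p m a ×ˢ descFinset p m b).filter fun q => |q.1 - q.2| ≤ 1

lemma closePairs_succ (hp : 0 < p) (m a b : ℕ) :
    closePairs p (m + 1) a b =
      ((closePairs p m (a / p) (b / p) ×ˢ
          (plusMinus (a % p : ℕ) ×ˢ plusMinus (b % p : ℕ))).filter
        fun q => |q.2.1 - q.2.2 + (p : ℤ) * (q.1.1 - q.1.2)| ≤ 1).image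
        fun q => (q.2.1 + (p : ℤ) * q.1.1, q.2.2 + (p : ℤ) * q.1.2) := by
  have hr : a % p < p := Nat.mod_lt _ hp
  have hs : b % p < p := Nat.mod_lt _ hp
  ext ⟨d, d'⟩
  simp only [closePairs, descFinset, Finset.mem_filter, Finset.mem_product, Finset.mem_image,
    Prod.exists, Prod.mk.injEq]
  constructor
  · rintro ⟨⟨⟨x, e, ⟨hx, he⟩, rfl⟩, ⟨y, f, ⟨hy, hf⟩, rfl⟩⟩, hclose⟩
    have hdiff : x + p * e - (y + p * f) = x - y + p * (e - f) := by ring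
    rw [hdiff] at hclose
    have hclose' := abs_sub_le_one_of_abs_add_mul_le_one hr hs hx hy hclose
    exact ⟨e, f, x, y, ⟨⟨⟨⟨he, hf⟩, hclose'⟩, hx, hy⟩, hclose⟩, rfl, rfl⟩
  · rintro ⟨e, f, x, y, ⟨⟨⟨⟨he, hf⟩, -⟩, hx, hy⟩, hclose⟩, rfl, rfl⟩
    refine ⟨⟨⟨x, e, ⟨hx, he⟩, rfl⟩, ⟨y, f, ⟨hy, hf⟩, rfl⟩⟩, ?_⟩
    convert hclose using 2
    ring

lemma card_closePairs_succ (hp : 0 < p) (m a b : ℕ) :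
    (closePairs p (m + 1) a b).card =
      closeDigitCount p (a % p) (b % p) (((a / p : ℕ) - (b / p : ℕ) : ℤ) % 2) *
        (closePairs p m (a / p) (b / p)).card := by
  have hr : a % p < p := Nat.mod_lt _ hp
  have hs : b % p < p := Nat.mod_lt _ hp
  set P := closePairs p m (a / p) (b / p)
  rw [closePairs_succ hp, Finset.card_image_of_injOn]
  · calc _ = ∑ q ∈ P, closeDigitCount p (a % p) (b % p) (q.1 - q.2) := by
          simp only [Finset.card_filter, Finset.sum_product, closeDigitCount]
          rfl
      _ = ∑ q ∈ P, closeDigitCount p (a % p) (b % p) (((a / p : ℕ) - (b / p : ℕ) : ℤ) % 2) := by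
          refine Finset.sum_congr rfl fun q hq => ?_
          simp only [P, closePairs, Finset.mem_filter, Finset.mem_product, abs_le] at hq
          have he := descFinset_modEq_two p m _ _ hq.1.1
          have hf := descFinset_modEq_two p m _ _ hq.1.2
          unfold Int.ModEq at he hf
          obtain h | h : q.1 - q.2 = ((a / p : ℕ) - (b / p : ℕ) : ℤ) % 2 ∨
              q.1 - q.2 = -(((a / p : ℕ) - (b / p : ℕ) : ℤ) % 2) := by omega
          · rw [h]
          · rw [h, closeDigitCount_neg]
      _ = _ := by rw [Finset.sum_const, smul_eq_mul, mul_comm]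
  · rintro ⟨⟨e, f⟩, x, y⟩ hq ⟨⟨e', f'⟩, x', y'⟩ hq' h
    simp only [Finset.coe_filter, Finset.mem_product, Set.mem_ofPred_eq, closePairs,
      Finset.mem_filter] at hq hq'
    simp only [Prod.mk.injEq] at h ⊢
    have he := (descFinset_modEq_two p m _ _ hq.1.1.1.1).trans
      (descFinset_modEq_two p m _ _ hq'.1.1.1.1).symm
    have hf := (descFinset_modEq_two p m _ _ hq.1.1.1.2).trans
      (descFinset_modEq_two p m _ _ hq'.1.1.1.2).symm
    obtain ⟨rfl, rfl⟩ := eq_and_eq_of_add_mul_eq hr hq.1.2.1 hq'.1.2.1 he h.1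
    obtain ⟨rfl, rfl⟩ := eq_and_eq_of_add_mul_eq hs hq.1.2.2 hq'.1.2.2 hf h.2
    simp

lemma card_closePairs_eq_zero_or_pow_two (hp : 0 < p) :
    ∀ m a b, (closePairs p m a b).card = 0 ∨ ∃ k ≤ m, (closePairs p m a b).card = 2 ^ k
  | 0, a, b => by
    have : (closePairs p 0 a b).card ≤ 1 :=
      (Finset.card_filter_le _ _).trans (by simp [descFinset])
    interval_cases h : (closePairs p 0 a b).card
    exacts [Or.inl rfl, Or.inr ⟨0, le_rfl, rfl⟩]
  | m + 1, a, b => by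
    rw [card_closePairs_succ hp]
    have hκ := closeDigitCount_le_two (p := p) (Nat.mod_lt a hp) (s := b % p)
      (((a / p : ℕ) - (b / p : ℕ) : ℤ) % 2)
    rcases card_closePairs_eq_zero_or_pow_two hp m (a / p) (b / p) with h | ⟨k, hk, h⟩
    · simp [h]
    · rw [h]
      interval_cases closeDigitCount p (a % p) (b % p) (((a / p : ℕ) - (b / p : ℕ) : ℤ) % 2)
      · simp
      · exact Or.inr ⟨k, by omega, one_mul _⟩
      · exact Or.inr ⟨k + 1, by omega, (pow_succ' 2 k).symm⟩

lemma card_inter_descFinset_eq_zero_or_card_closePairs (m a b : ℕ) :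
    (descFinset p m a ∩ descFinset p m b).card = 0 ∨
      (descFinset p m a ∩ descFinset p m b).card = (closePairs p m a b).card := by
  by_cases hab : (a : ℤ) ≡ b [ZMOD 2]
  · right
    -- all descendants of `a` and of `b` have one parity, so close pairs are diagonal
    have hdiag :
        closePairs p m a b = (descFinset p m a ∩ descFinset p m b).image fun d => (d, d) := by
      ext ⟨d, d'⟩
      simp only [closePairs, Finset.mem_filter, Finset.mem_product, Finset.mem_image,
        Finset.mem_inter, Prod.mk.injEq]
      constructor
      · rintro ⟨⟨hd, hd'⟩, hclose⟩
        have := (descFinset_modEq_two p m a d hd).trans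
          (hab.trans (descFinset_modEq_two p m b d' hd').symm)
        unfold Int.ModEq at this
        rw [abs_le] at hclose
        obtain rfl : d = d' := by omega
        exact ⟨d, ⟨hd, hd'⟩, rfl, rfl⟩
      · rintro ⟨c, ⟨hc, hc'⟩, rfl, rfl⟩
        simpa using ⟨hc, hc'⟩
    rw [hdiag, Finset.card_image_of_injective _ fun _ _ h => (Prod.mk.inj h).1]
  · left
    refine Finset.card_eq_zero.2 (Finset.eq_empty_of_forall_notMem fun d hd => hab ?_)
    rw [Finset.mem_inter] at hd
    exact (descFinset_modEq_two p m a d hd.1).symm.trans (descFinset_modEq_two p m b d hd.2)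

end

theorem Xcard_eq_zero_or_pow_two_general {p : ℕ} (hp : p.Prime) {n a b : ℕ} :
    Xcard p (n - 1) a b = 0 ∨ ∃ m ≤ n - 1, Xcard p (n - 1) a b = 2 ^ m := by
  rw [Xcard, ← coe_descFinset, ← coe_descFinset, ← Finset.coe_inter, Set.ncard_coe_finset]
  rcases card_inter_descFinset_eq_zero_or_card_closePairs (n - 1) a b with h | h
  · exact Or.inl h
  · rw [h]
    exact card_closePairs_eq_zero_or_pow_two hp.pos _ _ _

/-- For `p^{n-1} ≤ a, b < p^n`, the number of common descendants of `a` and `b` is either `0`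
or a power `2^m` with `0 ≤ m ≤ n - 1`. -/
theorem Xcard_eq_zero_or_pow_two {p : ℕ} (hp : p.Prime) {n a b : ℕ} (hn : 1 ≤ n)
    (ha₁ : p ^ (n - 1) ≤ a) (ha₂ : a < p ^ n)
    (hb₁ : p ^ (n - 1) ≤ b) (hb₂ : b < p ^ n) :
    Xcard p (n - 1) a b = 0 ∨ ∃ m ≤ n - 1, Xcard p (n - 1) a b = 2 ^ m :=
  Xcard_eq_zero_or_pow_two_general hp
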